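/- Fix positive integers N, K, P with N ≥ P, β > 0, set β' = 2β/P!, and fix r ∈ (0,1], with the random patterns ξ and examples η^{μ,a} as in the context. For each M ≥ 1 define the dense unsupervised free energy A_{N,M} = (1/N)·E[ log ∑_{σ∈{−1,+1}^N} exp( (β'/(2·R_M^{P/2}·M·N^{P−1}))·∑_{μ=1}^K ∑_{a=1}^M ∑* η_{i₁}^{μ,a}⋯η_{i_P}^{μ,a}·σ_{i₁}⋯σ_{i_P} ) ] and the dense Hebbian storage free energy A_N = (1/N)·E[ log ∑_{σ∈{−1,+1}^N} exp( (β'/(2·N^{P−1}))·∑_{μ=1}^K ∑* ξ_{i₁}^μ⋯ξ_{i_P}^μ·σ_{i₁}⋯σ_{i_P} ) ], where ∑* denotes the sum over P-tuples (i₁,…,i_P) ∈ {1,…,N}^P with pairwise distinct entries. Then lim_{M→∞} A_{N,M} = A_N. -/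

import Mathlib

open Finset MeasureTheory ProbabilityTheory Filter

/-- The embedding of a Boolean spin into `ℝ`. -/
noncomputable def spin : Bool → ℝ := fun b => if b then 1 else -1

section Aux

variable {Ω : Type} [MeasurableSpace Ω] {μ : Measure Ω}

lemma integrable_of_bdd [IsProbabilityMeasure μ] {f : Ω → ℝ} (hm : Measurable f)
    (C : ℝ) (h : ∀ ω, |f ω| ≤ C) : Integrable f μ :=
  Integrable.mono' (integrable_const C) hm.aestronglyMeasurable
    (ae_of_all _ (by simpa [Real.norm_eq_abs] using h))

lemma iIndepFun_precomp {ι κ : Type*} {f : ι → Ω → ℝ}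
    (h : iIndepFun f μ)
    {g : κ → ι} (hg : Function.Injective g) :
    iIndepFun (fun j => f (g j)) μ := by
  classical
  rw [iIndepFun_iff_measure_inter_preimage_eq_mul] at h ⊢
  intro S sets hsets
  set sets' : ι → Set ℝ := fun i =>
    if hi : ∃ j, j ∈ S ∧ g j = i then sets hi.choose else Set.univ with hsets'def
  have hkey : ∀ j ∈ S, sets' (g j) = sets j := by
    intro j hj
    have he : ∃ j', j' ∈ S ∧ g j' = g j := ⟨j, hj, rfl⟩
    have : he.choose = j := hg he.choose_spec.2
    simp only [hsets'def, dif_pos he, this]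
  have := h (S.image g) (sets := sets') ?_
  · have hL : (⋂ i ∈ S.image g, f i ⁻¹' sets' i) = ⋂ j ∈ S, f (g j) ⁻¹' sets j := by
      rw [Finset.set_biInter_finset_image]
      exact Set.iInter₂_congr fun j hj => by rw [hkey j hj]
    have hR : (∏ i ∈ S.image g, μ (f i ⁻¹' sets' i)) = ∏ j ∈ S, μ (f (g j) ⁻¹' sets j) := by
      rw [Finset.prod_image (fun a _ b _ hab => hg hab)]
      exact Finset.prod_congr rfl fun j hj => by rw [hkey j hj]
    rw [hL, hR] at this
    exact this
  · intro i hi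
    rcases Finset.mem_image.1 hi with ⟨j, hj, rfl⟩
    rw [hkey j hj]
    exact hsets j hj

lemma integral_pm [IsProbabilityMeasure μ] (X : Ω → ℝ) (hm : Measurable X)
    (hrange : ∀ ω, X ω = 1 ∨ X ω = -1) (p : ℝ) (hp : 0 ≤ p)
    (hlaw : μ {ω | X ω = 1} = ENNReal.ofReal p) :
    ∫ ω, X ω ∂μ = 2 * p - 1 := by
  have hA : MeasurableSet {ω | X ω = 1} := hm (measurableSet_singleton 1)
  have hXeq : X = fun ω => 2 * Set.indicator {ω | X ω = 1} (fun _ => (1:ℝ)) ω - 1 := by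
    funext ω
    by_cases h : X ω = 1
    · have hmem : ω ∈ {ω | X ω = 1} := h
      rw [Set.indicator_of_mem hmem, h]; norm_num
    · rcases hrange ω with h1 | h1
      · exact absurd h1 h
      · have hmem : ω ∉ {ω | X ω = 1} := h
        rw [Set.indicator_of_notMem hmem, h1]; norm_num
  rw [hXeq]
  rw [integral_sub (((integrable_const (1:ℝ)).indicator hA).const_mul 2) (integrable_const 1)]
  rw [integral_const_mul, integral_indicator_const (1:ℝ) hA, integral_const]
  simp [Measure.real, hlaw, ENNReal.toReal_ofReal hp]

lemma integral_prod_pm {κ : Type*} [IsProbabilityMeasure μ] (X : κ → Ω → ℝ)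
    (hindep : iIndepFun X μ)
    (hm : ∀ q, Measurable (X q)) (r : ℝ) (hmean : ∀ q, ∫ ω, X q ω ∂μ = r)
    (s : Finset κ) :
    ∫ ω, ∏ q ∈ s, X q ω ∂μ = r ^ s.card := by
  classical
  induction s using Finset.induction with
  | empty => simp
  | @insert q s hq ih =>
    have hprodmeas : Measurable (∏ j ∈ s, X j) := by
      rw [Finset.prod_fn]
      exact Finset.measurable_prod s fun i _ => hm i
    have key := ((hindep.indepFun_finsetProd_of_notMem hm hq).symm.integral_mul_eq_mul_integral
      (hm q).aestronglyMeasurable hprodmeas.aestronglyMeasurable)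
    have heq : (fun ω => ∏ j ∈ insert q s, X j ω) = (X q * ∏ j ∈ s, X j) := by
      funext ω
      simp [Finset.prod_insert hq, Finset.prod_fn]
    rw [heq, key, Finset.card_insert_of_notMem hq, pow_succ]
    have h2 : ∫ ω, (∏ j ∈ s, X j) ω ∂μ = r ^ s.card := by
      simpa [Finset.prod_fn] using ih
    rw [h2]
    have := hmean q
    rw [show integral μ (X q) = ∫ ω, X q ω ∂μ from rfl, this]
    ring

lemma abs_log_sum_exp_sub_le {I : Type*} [Fintype I] [Nonempty I] (x y : I → ℝ) (c : ℝ)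
    (h : ∀ i, |x i - y i| ≤ c) :
    |Real.log (∑ i, Real.exp (x i)) - Real.log (∑ i, Real.exp (y i))| ≤ c := by
  have key : ∀ u v : I → ℝ, (∀ i, u i ≤ v i + c) →
      Real.log (∑ i, Real.exp (u i)) ≤ Real.log (∑ i, Real.exp (v i)) + c := by
    intro u v huv
    have hposu : 0 < ∑ i, Real.exp (u i) :=
      Finset.sum_pos (fun i _ => Real.exp_pos _) Finset.univ_nonempty
    have hposv : 0 < ∑ i, Real.exp (v i) :=
      Finset.sum_pos (fun i _ => Real.exp_pos _) Finset.univ_nonempty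
    have h1 : ∑ i, Real.exp (u i) ≤ Real.exp c * ∑ i, Real.exp (v i) := by
      rw [Finset.mul_sum]
      refine Finset.sum_le_sum fun i _ => ?_
      rw [← Real.exp_add]
      exact Real.exp_le_exp.2 (by linarith [huv i])
    calc Real.log (∑ i, Real.exp (u i)) ≤ Real.log (Real.exp c * ∑ i, Real.exp (v i)) :=
          Real.log_le_log hposu h1
      _ = c + Real.log (∑ i, Real.exp (v i)) := by
          rw [Real.log_mul (Real.exp_ne_zero c) (ne_of_gt hposv), Real.log_exp]
      _ = _ := by ring
  rw [abs_sub_le_iff]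
  constructor
  · linarith [key x y (fun i => by have := (abs_le.1 (h i)).2; linarith)]
  · linarith [key y x (fun i => by have := (abs_le.1 (h i)).1; linarith)]

lemma key_L1_bound [IsProbabilityMeasure μ]
    (Y : ℕ → Ω → ℝ) (hmeas : ∀ a, Measurable (Y a))
    (hsq : ∀ a ω, Y a ω * Y a ω = 1) (hb : ∀ a ω, |Y a ω| ≤ 1)
    (q : ℝ) (hq1 : |q| ≤ 1) (hmean : ∀ a, ∫ ω, Y a ω ∂μ = q)
    (hpair : ∀ a b, a ≠ b → ∫ ω, Y a ω * Y b ω ∂μ = q * q)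
    (M : ℕ) (hM : 1 ≤ M) :
    ∫ ω, |∑ a ∈ Finset.range M, Y a ω - M * q| ∂μ ≤ Real.sqrt M := by
  set g : ℕ → Ω → ℝ := fun a ω => Y a ω - q with hgdef
  have hgmeas : ∀ a, Measurable (g a) := fun a => (hmeas a).sub measurable_const
  have hgbd : ∀ a ω, |g a ω| ≤ 2 := by
    intro a ω
    have := hb a ω
    have h1 := abs_sub_abs_le_abs_sub (Y a ω) q
    calc |g a ω| ≤ |Y a ω| + |q| := abs_sub (Y a ω) q
      _ ≤ 2 := by linarith
  have hggint : ∀ a b, Integrable (fun ω => g a ω * g b ω) μ := by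
    intro a b
    refine integrable_of_bdd ((hgmeas a).mul (hgmeas b)) 4 fun ω => ?_
    rw [abs_mul]
    calc |g a ω| * |g b ω| ≤ 2 * 2 := by
          exact mul_le_mul (hgbd a ω) (hgbd b ω) (abs_nonneg _) (by norm_num)
      _ = 4 := by norm_num
  have hYint : ∀ a, Integrable (Y a) μ := fun a => integrable_of_bdd (hmeas a) 1 (hb a)
  have hYYint : ∀ a b, Integrable (fun ω => Y a ω * Y b ω) μ := by
    intro a b
    refine integrable_of_bdd ((hmeas a).mul (hmeas b)) 1 fun ω => ?_
    rw [abs_mul]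
    exact mul_le_one₀ (hb a ω) (abs_nonneg _) (hb b ω)
  have hgg : ∀ a b, ∫ ω, g a ω * g b ω ∂μ = (if a = b then 1 - q * q else 0) := by
    intro a b
    have hexp : (fun ω => g a ω * g b ω)
        = fun ω => (Y a ω * Y b ω - q * Y a ω) - (q * Y b ω - q * q) := by
      funext ω; simp only [hgdef]; ring
    have e1 : ∫ ω, (Y a ω * Y b ω - q * Y a ω) ∂μ
        = (∫ ω, Y a ω * Y b ω ∂μ) - q * (∫ ω, Y a ω ∂μ) := by
      rw [integral_sub (hYYint a b) ((hYint a).const_mul q), integral_const_mul]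
    have e2 : ∫ ω, (q * Y b ω - q * q) ∂μ = q * (∫ ω, Y b ω ∂μ) - q * q := by
      rw [integral_sub ((hYint b).const_mul q) (integrable_const _), integral_const_mul,
        integral_const]
      simp
    have i1 : Integrable (fun ω => Y a ω * Y b ω - q * Y a ω) μ := by
      exact (hYYint a b).sub ((hYint a).const_mul q)
    have i2 : Integrable (fun ω => q * Y b ω - q * q) μ := by
      exact ((hYint b).const_mul q).sub (integrable_const _)
    rw [hexp, integral_sub i1 i2, e1, e2, hmean, hmean]
    by_cases hab : a = b
    · subst hab
      have h1 : (fun ω => Y a ω * Y a ω) = fun _ => (1:ℝ) := funext (hsq a)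
      rw [if_pos rfl, h1]
      simp
    · rw [hpair a b hab, if_neg hab]
      simp
  set f : Ω → ℝ := fun ω => ∑ a ∈ Finset.range M, Y a ω - M * q with hfdef
  have hfeq : f = fun ω => ∑ a ∈ Finset.range M, g a ω := by
    funext ω
    simp only [hfdef, hgdef, Finset.sum_sub_distrib, Finset.sum_const, Finset.card_range,
      nsmul_eq_mul]
  have hfmeas : Measurable f := by
    rw [hfeq]; exact Finset.measurable_sum _ fun a _ => hgmeas a
  have hfbd : ∀ ω, |f ω| ≤ 2 * M := by
    intro ω
    rw [hfeq]
    calc |∑ a ∈ Finset.range M, g a ω| ≤ ∑ a ∈ Finset.range M, |g a ω| :=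
          Finset.abs_sum_le_sum_abs _ _
      _ ≤ ∑ _a ∈ Finset.range M, 2 := Finset.sum_le_sum fun a _ => hgbd a ω
      _ = 2 * M := by simp [mul_comm]
  have hffint : Integrable (fun ω => f ω * f ω) μ := by
    refine integrable_of_bdd (hfmeas.mul hfmeas) ((2*M)*(2*M)) fun ω => ?_
    rw [abs_mul]
    exact mul_le_mul (hfbd ω) (hfbd ω) (abs_nonneg _) (by positivity)
  have hsecond : ∫ ω, f ω * f ω ∂μ ≤ (M : ℝ) := by
    have hexp : (fun ω => f ω * f ω)
        = fun ω => ∑ a ∈ Finset.range M, ∑ b ∈ Finset.range M, g a ω * g b ω := by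
      funext ω
      rw [hfeq]
      exact Finset.sum_mul_sum _ _ _ _
    rw [hexp, integral_finset_sum _ (fun a _ => integrable_finset_sum _ fun b _ => hggint a b)]
    have : ∀ a ∈ Finset.range M, ∫ ω, ∑ b ∈ Finset.range M, g a ω * g b ω ∂μ
        = (1 - q * q) := by
      intro a ha
      rw [integral_finset_sum _ (fun b _ => hggint a b)]
      calc ∑ b ∈ Finset.range M, ∫ ω, g a ω * g b ω ∂μ
          = ∑ b ∈ Finset.range M, (if a = b then 1 - q * q else 0) :=
            Finset.sum_congr rfl fun b _ => hgg a b
        _ = 1 - q * q := by rw [Finset.sum_ite_eq]; simp [ha, Finset.mem_range.1 ha]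
    rw [Finset.sum_congr rfl this, Finset.sum_const, Finset.card_range, nsmul_eq_mul]
    have hq2 : 0 ≤ q * q := mul_self_nonneg q
    have hM1 : (1:ℝ) ≤ M := by exact_mod_cast hM
    nlinarith
  -- pointwise bound |f| ≤ (f*f + M) / (2 * sqrt M)
  have hMpos : (0:ℝ) < M := by exact_mod_cast hM
  have hsqrtpos : 0 < Real.sqrt M := Real.sqrt_pos.2 hMpos
  have hptwise : ∀ ω, |f ω| ≤ (f ω * f ω + M) / (2 * Real.sqrt M) := by
    intro ω
    rw [le_div_iff₀ (by positivity)]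
    nlinarith [sq_nonneg (|f ω| - Real.sqrt M), Real.sq_sqrt hMpos.le,
      abs_mul_abs_self (f ω), abs_nonneg (f ω)]
  calc ∫ ω, |f ω| ∂μ ≤ ∫ ω, (f ω * f ω + M) / (2 * Real.sqrt M) ∂μ := by
        refine integral_mono (integrable_of_bdd hfmeas.abs (2*M)
          (fun ω => by rw [abs_abs]; exact hfbd ω))
          (((hffint.add (integrable_const _)).div_const _)) hptwise
    _ = ((∫ ω, f ω * f ω ∂μ) + M) / (2 * Real.sqrt M) := by
        rw [integral_div, integral_add hffint (integrable_const _), integral_const]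
        simp
    _ ≤ ((M : ℝ) + M) / (2 * Real.sqrt M) := by
        gcongr
    _ = (M : ℝ) / Real.sqrt M := by
        rw [show ((M:ℝ) + M) = 2 * M by ring, mul_div_mul_left _ _ (two_ne_zero)]
    _ = Real.sqrt M := Real.div_sqrt

end Aux

lemma abs_double_sum_le {A B : Type*} [Fintype A] [Fintype B] (g : A → B → ℝ) (C : ℝ)
    (h : ∀ a b, |g a b| ≤ C) :
    |∑ a, ∑ b, g a b| ≤ (Fintype.card A : ℝ) * (Fintype.card B : ℝ) * C := by
  calc |∑ a, ∑ b, g a b| ≤ ∑ a, |∑ b, g a b| := Finset.abs_sum_le_sum_abs _ _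
    _ ≤ ∑ _a : A, (Fintype.card B : ℝ) * C := by
        refine Finset.sum_le_sum fun a _ => ?_
        calc |∑ b, g a b| ≤ ∑ b, |g a b| := Finset.abs_sum_le_sum_abs _ _
          _ ≤ ∑ _b : B, C := Finset.sum_le_sum fun b _ => h a b
          _ = (Fintype.card B : ℝ) * C := by
              rw [Finset.sum_const, Finset.card_univ, nsmul_eq_mul]
    _ = (Fintype.card A : ℝ) * (Fintype.card B : ℝ) * C := by
        rw [Finset.sum_const, Finset.card_univ, nsmul_eq_mul]; ring


lemma abs_spin (b : Bool) : |spin b| ≤ 1 := by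
  unfold spin; cases b <;> norm_num

lemma abs_log_sum_exp_le {I : Type*} [Fintype I] [Nonempty I] (x : I → ℝ) (C : ℝ)
    (h : ∀ i, |x i| ≤ C) :
    |Real.log (∑ i, Real.exp (x i))| ≤ C + |Real.log (Fintype.card I : ℝ)| := by
  have h0 := abs_log_sum_exp_sub_le x (fun _ => 0) C (fun i => by simpa using h i)
  have hcard : (∑ _i : I, Real.exp 0) = (Fintype.card I : ℝ) := by
    simp [Real.exp_zero]
  rw [hcard] at h0
  have htri := abs_add_le (Real.log (∑ i, Real.exp (x i)) - Real.log (Fintype.card I : ℝ))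
    (Real.log (Fintype.card I : ℝ))
  simp only [sub_add_cancel] at htri
  linarith


/-- in the big-data limit `M → ∞`, the free energy of the dense
unsupervised Hebbian learning network converges to the free energy of the dense
Hebbian storage network.  The dense sums run over `P`-tuples of pairwise
distinct site indices. -/
theorem dense_unsupervised_free_energy_tendsto_storage
    (N K P : ℕ) (hN : 0 < N) (hK : 0 < K) (hP : 0 < P) (hNP : P ≤ N)
    (β β' r : ℝ) (hβ : 0 < β) (hβ' : β' = 2 * β / (Nat.factorial P : ℝ))
    (hr0 : 0 < r) (hr1 : r ≤ 1)
    {Ω : Type} [MeasurableSpace Ω] (μ : Measure Ω) [IsProbabilityMeasure μ]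
    (ξ : Fin N → Fin K → Ω → ℝ) (χ : Fin N → Fin K → ℕ → Ω → ℝ)
    (hmeasξ : ∀ i k, Measurable (ξ i k))
    (hmeasχ : ∀ i k a, Measurable (χ i k a))
    (hrangeξ : ∀ i k ω, ξ i k ω = 1 ∨ ξ i k ω = -1)
    (hrangeχ : ∀ i k a ω, χ i k a ω = 1 ∨ χ i k a ω = -1)
    (hlawξ : ∀ i k, μ {ω | ξ i k ω = 1} = ENNReal.ofReal (1 / 2)
      ∧ μ {ω | ξ i k ω = -1} = ENNReal.ofReal (1 / 2))
    (hlawχ : ∀ i k a, μ {ω | χ i k a ω = 1} = ENNReal.ofReal ((1 + r) / 2)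
      ∧ μ {ω | χ i k a ω = -1} = ENNReal.ofReal ((1 - r) / 2))
    (hindep : iIndepFun
      (Sum.elim (fun q : Fin N × Fin K => ξ q.1 q.2)
        (fun q : Fin N × Fin K × ℕ => χ q.1 q.2.1 q.2.2)) μ)
    (η : Fin N → Fin K → ℕ → Ω → ℝ)
    (hη : ∀ i k a ω, η i k a ω = χ i k a ω * ξ i k ω)
    (R : ℕ → ℝ) (hR : ∀ M, R M = r ^ 2 + (1 - r ^ 2) / (M : ℝ))
    (AUns : ℕ → ℝ)
    (hAUns : ∀ M, AUns M = (1 / (N : ℝ)) * ∫ ω,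
      Real.log (∑ σ : Fin N → Bool, Real.exp
        ((β' / (2 * R M ^ ((P : ℝ) / 2) * M * (N : ℝ) ^ (P - 1))) *
          ∑ k : Fin K, ∑ a ∈ Finset.range M,
            ∑ v : Fin P → Fin N, if Function.Injective v then
              (∏ l : Fin P, η (v l) k a ω) * ∏ l : Fin P, spin (σ (v l))
            else 0)) ∂μ)
    (AStor : ℝ)
    (hAStor : AStor = (1 / (N : ℝ)) * ∫ ω,
      Real.log (∑ σ : Fin N → Bool, Real.exp
        ((β' / (2 * (N : ℝ) ^ (P - 1))) *
          ∑ k : Fin K,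
            ∑ v : Fin P → Fin N, if Function.Injective v then
              (∏ l : Fin P, ξ (v l) k ω) * ∏ l : Fin P, spin (σ (v l))
            else 0)) ∂μ) :
    Tendsto AUns atTop (nhds AStor) := by
  classical
  -- basic positivity and constants
  set q : ℝ := r ^ P with hqdef
  have hq0 : 0 < q := pow_pos hr0 P
  have hq1 : |q| ≤ 1 := by
    rw [hqdef, abs_pow, abs_of_pos hr0]
    exact pow_le_one₀ hr0.le hr1
  have hNpos : (0:ℝ) < (N:ℝ) := by exact_mod_cast hN
  have hNpow : (0:ℝ) < (N:ℝ) ^ (P - 1) := pow_pos hNpos _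
  have hβ'pos : 0 < β' := by
    rw [hβ']
    have : (0:ℝ) < (Nat.factorial P : ℝ) := by exact_mod_cast Nat.factorial_pos P
    positivity
  set c1 : ℝ := β' / (2 * (N:ℝ) ^ (P-1)) with hc1def
  have hc1 : 0 < c1 := by rw [hc1def]; positivity
  -- rpow facts
  have hr2rpow : ((r^2 : ℝ)) ^ ((P:ℝ)/2) = q := by
    rw [← Real.rpow_natCast r 2, ← Real.rpow_mul hr0.le]
    have h2 : ((2:ℕ):ℝ) * ((P:ℝ)/2) = (P:ℝ) := by push_cast; ring
    rw [h2, Real.rpow_natCast, hqdef]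
  have hr2nonneg : (0:ℝ) ≤ r^2 := sq_nonneg r
  have hRge : ∀ M : ℕ, r^2 ≤ R M := by
    intro M
    rw [hR]
    have : 0 ≤ (1 - r^2)/(M:ℝ) := by
      apply div_nonneg ?_ (Nat.cast_nonneg M)
      nlinarith
    linarith
  have hRlb : ∀ M : ℕ, q ≤ R M ^ ((P:ℝ)/2) := by
    intro M
    rw [← hr2rpow]
    exact Real.rpow_le_rpow hr2nonneg (hRge M) (by positivity)
  have hRpow_pos : ∀ M : ℕ, 0 < R M ^ ((P:ℝ)/2) := fun M => lt_of_lt_of_le hq0 (hRlb M)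
  -- the error sequences
  set e : ℕ → ℝ := fun M => |R M ^ ((P:ℝ)/2) - q| with hedef
  have he0 : Tendsto e atTop (nhds 0) := by
    have h1 : Tendsto (fun M : ℕ => (1 - r^2)/(M:ℝ)) atTop (nhds 0) :=
      tendsto_const_nhds.div_atTop tendsto_natCast_atTop_atTop
    have hRt : Tendsto (fun M : ℕ => R M) atTop (nhds (r^2)) := by
      have h2 := tendsto_const_nhds (x := r^2) (f := atTop (α := ℕ)) |>.add h1
      simp only [add_zero] at h2
      refine h2.congr fun M => ?_
      rw [hR]
    have hcont : ContinuousAt (fun x : ℝ => x ^ ((P:ℝ)/2)) (r^2) :=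
      Real.continuousAt_rpow_const _ _ (Or.inr (by positivity))
    have h3 : Tendsto (fun M : ℕ => R M ^ ((P:ℝ)/2)) atTop (nhds q) := by
      have := hcont.tendsto.comp hRt
      rwa [hr2rpow] at this
    have h4 := (h3.sub (tendsto_const_nhds (x := q))).abs
    simpa using h4
  have hsqrt0 : Tendsto (fun M : ℕ => (Real.sqrt M)⁻¹) atTop (nhds 0) := by
    have h1 : Tendsto (fun M : ℕ => ((M:ℝ))⁻¹) atTop (nhds 0) :=
      tendsto_inv_atTop_zero.comp tendsto_natCast_atTop_atTop
    have h2 := (Real.continuous_sqrt.tendsto 0).comp h1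
    simp only [Function.comp_def, Real.sqrt_inv, Real.sqrt_zero] at h2
    exact h2
  -- the χ family, reindexed
  set X : Fin N × Fin K × ℕ → Ω → ℝ := fun t => χ t.1 t.2.1 t.2.2 with hXdef
  have hXindep : iIndepFun X μ :=
    iIndepFun_precomp hindep Sum.inr_injective
  have hXmeas : ∀ t, Measurable (X t) := fun t => hmeasχ _ _ _
  have hXmean : ∀ t, ∫ ω, X t ω ∂μ = r := by
    intro t
    have h1 := integral_pm (μ := μ) (X t) (hXmeas t) (fun ω => hrangeχ _ _ _ ω)
      ((1+r)/2) (by linarith) ((hlawχ t.1 t.2.1 t.2.2).1)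
    rw [h1]; ring
  -- partial sums
  set S : ℕ → Fin K → (Fin P → Fin N) → Ω → ℝ :=
    fun M k v ω => ∑ a ∈ Finset.range M, ∏ l : Fin P, χ (v l) k a ω with hSdef
  have hSmeas : ∀ M k v, Measurable (S M k v) := fun M k v =>
    Finset.measurable_sum _ fun a _ => Finset.measurable_prod _ fun l _ => hmeasχ _ _ _
  have hYabs : ∀ (k : Fin K) (v : Fin P → Fin N) (a : ℕ) (ω : Ω),
      |∏ l : Fin P, χ (v l) k a ω| ≤ 1 := by
    intro k v a ω
    rw [Finset.abs_prod]
    refine Finset.prod_le_one (fun l _ => abs_nonneg _) fun l _ => ?_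
    rcases hrangeχ (v l) k a ω with h | h <;> rw [h] <;> norm_num
  have hSabs : ∀ M k v ω, |S M k v ω| ≤ M := by
    intro M k v ω
    calc |S M k v ω| ≤ ∑ a ∈ Finset.range M, |∏ l : Fin P, χ (v l) k a ω| :=
          Finset.abs_sum_le_sum_abs _ _
      _ ≤ ∑ _a ∈ Finset.range M, 1 := Finset.sum_le_sum fun a _ => hYabs k v a ω
      _ = M := by simp
  -- L¹ concentration of the partial sums
  have hYstats : ∀ (k : Fin K) (v : Fin P → Fin N), Function.Injective v →
      ∀ (M : ℕ), 1 ≤ M → ∫ ω, |S M k v ω - M * q| ∂μ ≤ Real.sqrt M := by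
    intro k v hv M hM
    set Y : ℕ → Ω → ℝ := fun a ω => ∏ l : Fin P, χ (v l) k a ω with hYdef
    have hYmeas : ∀ a, Measurable (Y a) := fun a =>
      Finset.measurable_prod _ fun l _ => hmeasχ _ _ _
    have hYsq : ∀ a ω, Y a ω * Y a ω = 1 := by
      intro a ω
      rw [hYdef]
      simp only
      rw [← Finset.prod_mul_distrib]
      refine Finset.prod_eq_one fun l _ => ?_
      rcases hrangeχ (v l) k a ω with h | h <;> rw [h] <;> norm_num
    have hinjv : ∀ a : ℕ, Function.Injective
        (fun l : Fin P => ((v l, k, a) : Fin N × Fin K × ℕ)) := by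
      intro a l l' h
      exact hv (congrArg Prod.fst h)
    set T : ℕ → Finset (Fin N × Fin K × ℕ) :=
      fun a => Finset.image (fun l => (v l, k, a)) Finset.univ with hTdef
    have hTcard : ∀ a, (T a).card = P := by
      intro a
      rw [hTdef]
      simp only
      rw [Finset.card_image_of_injective _ (hinjv a), Finset.card_univ, Fintype.card_fin]
    have hYT : ∀ a ω, Y a ω = ∏ t ∈ T a, X t ω := by
      intro a ω
      rw [hTdef]
      simp only
      rw [Finset.prod_image (fun l _ l' _ h => hinjv a h)]
    have hTdisj : ∀ a b : ℕ, a ≠ b → Disjoint (T a) (T b) := by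
      intro a b hab
      rw [Finset.disjoint_left]
      intro t hta htb
      rcases Finset.mem_image.1 hta with ⟨l, _, rfl⟩
      rcases Finset.mem_image.1 htb with ⟨l', _, h⟩
      exact hab (congrArg (fun t : Fin N × Fin K × ℕ => t.2.2) h).symm
    have hmean : ∀ a, ∫ ω, Y a ω ∂μ = q := by
      intro a
      simp only [hYT]
      rw [integral_prod_pm X hXindep hXmeas r hXmean, hTcard, hqdef]
    have hpair : ∀ a b, a ≠ b → ∫ ω, Y a ω * Y b ω ∂μ = q * q := by
      intro a b hab
      have hprod : ∀ ω, Y a ω * Y b ω = ∏ t ∈ T a ∪ T b, X t ω := by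
        intro ω
        rw [Finset.prod_union (hTdisj a b hab), hYT a ω, hYT b ω]
      simp only [hprod]
      rw [integral_prod_pm X hXindep hXmeas r hXmean,
        Finset.card_union_of_disjoint (hTdisj a b hab), hTcard, hTcard, pow_add, hqdef]
    exact key_L1_bound Y hYmeas hYsq (fun a ω => hYabs k v a ω) q hq1 hmean hpair M hM
  -- normalized fluctuation
  set u : ℕ → ℝ := fun M => (R M ^ ((P:ℝ)/2) * M)⁻¹ with hudef
  have hupos : ∀ M : ℕ, 1 ≤ M → 0 < u M := by
    intro M hM
    have hMpos : (0:ℝ) < M := by exact_mod_cast hM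
    rw [hudef]
    simp only
    exact inv_pos.2 (mul_pos (hRpow_pos M) hMpos)
  set Z : ℕ → Fin K → (Fin P → Fin N) → Ω → ℝ :=
    fun M k v ω => u M * S M k v ω - 1 with hZdef
  have hZmeas : ∀ M k v, Measurable (Z M k v) := fun M k v =>
    (measurable_const.mul (hSmeas M k v)).sub measurable_const
  have hZabs : ∀ M k v ω, 1 ≤ M → |Z M k v ω| ≤ u M * M + 1 := by
    intro M k v ω hM
    calc |Z M k v ω| ≤ |u M * S M k v ω| + 1 := by
          rw [hZdef]; simp only
          calc |u M * S M k v ω - 1| ≤ |u M * S M k v ω| + |(1:ℝ)| := abs_sub _ _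
            _ = |u M * S M k v ω| + 1 := by norm_num
      _ ≤ u M * M + 1 := by
          have h1 : |u M * S M k v ω| = u M * |S M k v ω| := by
            rw [abs_mul, abs_of_pos (hupos M hM)]
          rw [h1]
          have := mul_le_mul_of_nonneg_left (hSabs M k v ω) (hupos M hM).le
          linarith
  -- spin and pattern product bounds
  have hξabs : ∀ (k : Fin K) (v : Fin P → Fin N) (ω : Ω), |∏ l : Fin P, ξ (v l) k ω| ≤ 1 := by
    intro k v ω
    rw [Finset.abs_prod]
    refine Finset.prod_le_one (fun l _ => abs_nonneg _) fun l _ => ?_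
    rcases hrangeξ (v l) k ω with h | h <;> rw [h] <;> norm_num
  have hspabs : ∀ (σ : Fin N → Bool) (v : Fin P → Fin N), |∏ l : Fin P, spin (σ (v l))| ≤ 1 := by
    intro σ v
    rw [Finset.abs_prod]
    exact Finset.prod_le_one (fun l _ => abs_nonneg _) fun l _ => abs_spin _
  -- the key pointwise identity between the two exponents
  have hEUeq : ∀ M : ℕ, 1 ≤ M → ∀ (σ : Fin N → Bool) (ω : Ω),
      (β' / (2 * R M ^ ((P:ℝ)/2) * M * (N:ℝ) ^ (P-1))) *
        (∑ k : Fin K, ∑ a ∈ Finset.range M, ∑ v : Fin P → Fin N,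
          if Function.Injective v then
            (∏ l : Fin P, η (v l) k a ω) * ∏ l : Fin P, spin (σ (v l)) else 0)
      - (β' / (2 * (N:ℝ) ^ (P-1))) *
        (∑ k : Fin K, ∑ v : Fin P → Fin N,
          if Function.Injective v then
            (∏ l : Fin P, ξ (v l) k ω) * ∏ l : Fin P, spin (σ (v l)) else 0)
      = c1 * ∑ k : Fin K, ∑ v : Fin P → Fin N,
          if Function.Injective v then
            (∏ l : Fin P, ξ (v l) k ω) * (∏ l : Fin P, spin (σ (v l))) * Z M k v ω
          else 0 := by
    intro M hM σ ω
    have hMne : ((M:ℝ)) ≠ 0 := by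
      have : (0:ℝ) < M := by exact_mod_cast hM
      exact ne_of_gt this
    have hAne : R M ^ ((P:ℝ)/2) ≠ 0 := ne_of_gt (hRpow_pos M)
    have hBne : ((N:ℝ)) ^ (P-1) ≠ 0 := ne_of_gt hNpow
    have hcoef : β' / (2 * R M ^ ((P:ℝ)/2) * M * (N:ℝ)^(P-1)) = c1 * u M := by
      rw [hc1def, hudef]
      simp only
      field_simp
    have hinner : ∀ k : Fin K,
        (∑ a ∈ Finset.range M, ∑ v : Fin P → Fin N,
          if Function.Injective v then
            (∏ l : Fin P, η (v l) k a ω) * ∏ l : Fin P, spin (σ (v l)) else 0)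
        = ∑ v : Fin P → Fin N,
            if Function.Injective v then
              (∏ l : Fin P, ξ (v l) k ω) * (∏ l : Fin P, spin (σ (v l))) * S M k v ω
            else 0 := by
      intro k
      rw [Finset.sum_comm]
      refine Finset.sum_congr rfl fun v _ => ?_
      by_cases hv : Function.Injective v
      · simp only [if_pos hv]
        have hterm : ∀ a : ℕ, (∏ l : Fin P, η (v l) k a ω) * ∏ l : Fin P, spin (σ (v l))
            = (∏ l : Fin P, χ (v l) k a ω) *
              ((∏ l : Fin P, ξ (v l) k ω) * ∏ l : Fin P, spin (σ (v l))) := by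
          intro a
          have hη' : (∏ l : Fin P, η (v l) k a ω)
              = (∏ l : Fin P, χ (v l) k a ω) * ∏ l : Fin P, ξ (v l) k ω := by
            rw [← Finset.prod_mul_distrib]
            exact Finset.prod_congr rfl fun l _ => hη (v l) k a ω
          rw [hη']; ring
        rw [Finset.sum_congr rfl fun a _ => hterm a, ← Finset.sum_mul]
        rw [show (∑ a ∈ Finset.range M, ∏ l : Fin P, χ (v l) k a ω) = S M k v ω from rfl]
        ring
      · simp [hv]
    rw [hcoef, Finset.sum_congr rfl fun k _ => hinner k]
    have hmain : u M * (∑ k : Fin K, ∑ v : Fin P → Fin N,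
          if Function.Injective v then
            (∏ l : Fin P, ξ (v l) k ω) * (∏ l : Fin P, spin (σ (v l))) * S M k v ω
          else 0)
        - (∑ k : Fin K, ∑ v : Fin P → Fin N,
            if Function.Injective v then
              (∏ l : Fin P, ξ (v l) k ω) * ∏ l : Fin P, spin (σ (v l)) else 0)
        = ∑ k : Fin K, ∑ v : Fin P → Fin N,
            if Function.Injective v then
              (∏ l : Fin P, ξ (v l) k ω) * (∏ l : Fin P, spin (σ (v l))) * Z M k v ω
            else 0 := by
      rw [Finset.mul_sum, ← Finset.sum_sub_distrib]
      refine Finset.sum_congr rfl fun k _ => ?_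
      rw [Finset.mul_sum, ← Finset.sum_sub_distrib]
      refine Finset.sum_congr rfl fun v _ => ?_
      by_cases hv : Function.Injective v
      · simp only [if_pos hv]
        rw [show Z M k v ω = u M * S M k v ω - 1 from rfl]
        ring
      · simp [hv]
    rw [← hmain]
    ring
  -- cardinality constant
  set CK : ℝ := (Fintype.card (Fin K) : ℝ) * (Fintype.card (Fin P → Fin N) : ℝ) with hCKdef
  have hCK0 : (0:ℝ) ≤ CK := by rw [hCKdef]; positivity
  -- the exponents as functions
  set EU : ℕ → (Fin N → Bool) → Ω → ℝ := fun M σ ω =>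
    (β' / (2 * R M ^ ((P:ℝ)/2) * M * (N:ℝ) ^ (P-1))) *
      ∑ k : Fin K, ∑ a ∈ Finset.range M, ∑ v : Fin P → Fin N,
        if Function.Injective v then
          (∏ l : Fin P, η (v l) k a ω) * ∏ l : Fin P, spin (σ (v l)) else 0 with hEUdef
  set ES : (Fin N → Bool) → Ω → ℝ := fun σ ω =>
    (β' / (2 * (N:ℝ) ^ (P-1))) *
      ∑ k : Fin K, ∑ v : Fin P → Fin N,
        if Function.Injective v then
          (∏ l : Fin P, ξ (v l) k ω) * ∏ l : Fin P, spin (σ (v l)) else 0 with hESdef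
  -- pointwise bound of the exponent difference
  have hdiff : ∀ M, 1 ≤ M → ∀ (σ : Fin N → Bool) (ω : Ω),
      |EU M σ ω - ES σ ω|
        ≤ c1 * ∑ k : Fin K, ∑ v : Fin P → Fin N,
            if Function.Injective v then |Z M k v ω| else 0 := by
    intro M hM σ ω
    simp only [hEUdef, hESdef]
    rw [hEUeq M hM σ ω, abs_mul, abs_of_pos hc1]
    refine mul_le_mul_of_nonneg_left ?_ hc1.le
    calc |∑ k : Fin K, ∑ v : Fin P → Fin N,
          if Function.Injective v then
            (∏ l : Fin P, ξ (v l) k ω) * (∏ l : Fin P, spin (σ (v l))) * Z M k v ω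
          else 0|
        ≤ ∑ k : Fin K, |∑ v : Fin P → Fin N,
            if Function.Injective v then
              (∏ l : Fin P, ξ (v l) k ω) * (∏ l : Fin P, spin (σ (v l))) * Z M k v ω
            else 0| := Finset.abs_sum_le_sum_abs _ _
      _ ≤ ∑ k : Fin K, ∑ v : Fin P → Fin N,
            |if Function.Injective v then
              (∏ l : Fin P, ξ (v l) k ω) * (∏ l : Fin P, spin (σ (v l))) * Z M k v ω
            else 0| := Finset.sum_le_sum fun k _ => Finset.abs_sum_le_sum_abs _ _
      _ ≤ ∑ k : Fin K, ∑ v : Fin P → Fin N,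
            if Function.Injective v then |Z M k v ω| else 0 := by
          refine Finset.sum_le_sum fun k _ => Finset.sum_le_sum fun v _ => ?_
          by_cases hv : Function.Injective v
          · simp only [if_pos hv]
            have h1 : |(∏ l : Fin P, ξ (v l) k ω) * ∏ l : Fin P, spin (σ (v l))| ≤ 1 := by
              rw [abs_mul]
              exact mul_le_one₀ (hξabs k v ω) (abs_nonneg _) (hspabs σ v)
            calc |(∏ l : Fin P, ξ (v l) k ω) * (∏ l : Fin P, spin (σ (v l))) * Z M k v ω|
                = |(∏ l : Fin P, ξ (v l) k ω) * ∏ l : Fin P, spin (σ (v l))| * |Z M k v ω| :=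
                  abs_mul _ _
              _ ≤ 1 * |Z M k v ω| :=
                  mul_le_mul_of_nonneg_right h1 (abs_nonneg _)
              _ = |Z M k v ω| := one_mul _
          · simp [hv]
  -- bounds on the exponents
  have hESb : ∀ (σ : Fin N → Bool) (ω : Ω), |ES σ ω| ≤ c1 * CK := by
    intro σ ω
    simp only [hESdef]
    rw [abs_mul]
    have h1 : |β' / (2 * (N:ℝ) ^ (P-1))| = c1 := abs_of_pos hc1
    rw [h1]
    refine mul_le_mul_of_nonneg_left ?_ hc1.le
    have h2 := abs_double_sum_le
      (fun (k : Fin K) (v : Fin P → Fin N) =>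
        if Function.Injective v then
          (∏ l : Fin P, ξ (v l) k ω) * ∏ l : Fin P, spin (σ (v l)) else 0) 1 ?_
    · calc |∑ k : Fin K, ∑ v : Fin P → Fin N, _| ≤ (Fintype.card (Fin K) : ℝ) *
            (Fintype.card (Fin P → Fin N) : ℝ) * 1 := h2
        _ = CK := by rw [hCKdef]; ring
    · intro k v
      by_cases hv : Function.Injective v
      · simp only [if_pos hv]
        rw [abs_mul]
        exact mul_le_one₀ (hξabs k v ω) (abs_nonneg _) (hspabs σ v)
      · simp [hv]
  have hEUb : ∀ M, 1 ≤ M → ∀ (σ : Fin N → Bool) (ω : Ω),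
      |EU M σ ω| ≤ c1 * CK + c1 * (CK * (u M * M + 1)) := by
    intro M hM σ ω
    have h1 := hdiff M hM σ ω
    have h2 : c1 * ∑ k : Fin K, ∑ v : Fin P → Fin N,
        (if Function.Injective v then |Z M k v ω| else 0) ≤ c1 * (CK * (u M * M + 1)) := by
      refine mul_le_mul_of_nonneg_left ?_ hc1.le
      have hb1 : (0:ℝ) ≤ u M * M + 1 := by
        have := (hupos M hM).le
        have : (0:ℝ) ≤ u M * M := mul_nonneg this (Nat.cast_nonneg M)
        linarith
      calc (∑ k : Fin K, ∑ v : Fin P → Fin N,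
            if Function.Injective v then |Z M k v ω| else 0)
          ≤ ∑ _k : Fin K, ∑ _v : Fin P → Fin N, (u M * M + 1) := by
            refine Finset.sum_le_sum fun k _ => Finset.sum_le_sum fun v _ => ?_
            by_cases hv : Function.Injective v
            · simp only [if_pos hv]; exact hZabs M k v ω hM
            · simp only [if_neg hv]; exact hb1
        _ = CK * (u M * M + 1) := by
            rw [Finset.sum_const, Finset.sum_const, Finset.card_univ, Finset.card_univ,
              nsmul_eq_mul, nsmul_eq_mul, hCKdef]
            push_cast
            ring
    calc |EU M σ ω| ≤ |ES σ ω| + |EU M σ ω - ES σ ω| := by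
          have := abs_add_le (ES σ ω) (EU M σ ω - ES σ ω)
          simp only [add_sub_cancel] at this
          linarith
      _ ≤ c1 * CK + c1 * (CK * (u M * M + 1)) := add_le_add (hESb σ ω) (le_trans h1 h2)
  -- measurability of the exponents
  have hηmeas : ∀ i k a, Measurable (η i k a) := by
    intro i k a
    have h : η i k a = fun ω => χ i k a ω * ξ i k ω := funext (hη i k a)
    rw [h]
    exact (hmeasχ i k a).mul (hmeasξ i k)
  have hEUmeas : ∀ M (σ : Fin N → Bool), Measurable (EU M σ) := by
    intro M σ
    simp only [hEUdef]
    refine measurable_const.mul ?_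
    refine Finset.measurable_sum _ fun k _ => Finset.measurable_sum _ fun a _ =>
      Finset.measurable_sum _ fun v _ => ?_
    by_cases hv : Function.Injective v
    · simp only [if_pos hv]
      exact (Finset.measurable_prod _ fun l _ => hηmeas _ _ _).mul measurable_const
    · simp only [if_neg hv]
      exact measurable_const
  have hESmeas : ∀ (σ : Fin N → Bool), Measurable (ES σ) := by
    intro σ
    simp only [hESdef]
    refine measurable_const.mul ?_
    refine Finset.measurable_sum _ fun k _ => Finset.measurable_sum _ fun v _ => ?_
    by_cases hv : Function.Injective v
    · simp only [if_pos hv]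
      exact (Finset.measurable_prod _ fun l _ => hmeasξ _ _).mul measurable_const
    · simp only [if_neg hv]
      exact measurable_const
  -- the free-energy densities
  set FU : ℕ → Ω → ℝ := fun M ω =>
    Real.log (∑ σ : Fin N → Bool, Real.exp (EU M σ ω)) with hFUdef
  set FS : Ω → ℝ := fun ω =>
    Real.log (∑ σ : Fin N → Bool, Real.exp (ES σ ω)) with hFSdef
  have hAU : ∀ M, AUns M = (1/(N:ℝ)) * ∫ ω, FU M ω ∂μ := fun M => hAUns M
  have hAS : AStor = (1/(N:ℝ)) * ∫ ω, FS ω ∂μ := hAStor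
  have hFUmeas : ∀ M, Measurable (FU M) := by
    intro M
    simp only [hFUdef]
    exact (Finset.measurable_sum _ fun σ _ => (hEUmeas M σ).exp).log
  have hFSmeas : Measurable FS := by
    simp only [hFSdef]
    exact (Finset.measurable_sum _ fun σ _ => (hESmeas σ).exp).log
  set L : ℝ := |Real.log (Fintype.card (Fin N → Bool) : ℝ)| with hLdef
  have hFUb : ∀ M, 1 ≤ M → ∀ ω,
      |FU M ω| ≤ (c1 * CK + c1 * (CK * (u M * M + 1))) + L := by
    intro M hM ω
    simp only [hFUdef, hLdef]
    exact abs_log_sum_exp_le (fun σ => EU M σ ω) _ (fun σ => hEUb M hM σ ω)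
  have hFSb : ∀ ω, |FS ω| ≤ c1 * CK + L := by
    intro ω
    simp only [hFSdef, hLdef]
    exact abs_log_sum_exp_le (fun σ => ES σ ω) _ (fun σ => hESb σ ω)
  have hFUint : ∀ M, 1 ≤ M → Integrable (FU M) μ := fun M hM =>
    integrable_of_bdd (hFUmeas M) _ (hFUb M hM)
  have hFSint : Integrable FS μ := integrable_of_bdd hFSmeas _ hFSb
  have hFdiff : ∀ M, 1 ≤ M → ∀ ω,
      |FU M ω - FS ω| ≤ c1 * ∑ k : Fin K, ∑ v : Fin P → Fin N,
        if Function.Injective v then |Z M k v ω| else 0 := by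
    intro M hM ω
    simp only [hFUdef, hFSdef]
    exact abs_log_sum_exp_sub_le (fun σ => EU M σ ω) (fun σ => ES σ ω) _
      (fun σ => hdiff M hM σ ω)
  -- integrability of the error terms
  have hiteint : ∀ M, 1 ≤ M → ∀ (k : Fin K) (v : Fin P → Fin N),
      Integrable (fun ω => if Function.Injective v then |Z M k v ω| else 0) μ := by
    intro M hM k v
    by_cases hv : Function.Injective v
    · simp only [if_pos hv]
      exact integrable_of_bdd (hZmeas M k v).abs (u M * M + 1)
        (fun ω => by rw [abs_abs]; exact hZabs M k v ω hM)
    · simp only [if_neg hv]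
      exact integrable_const 0
  have hDint : ∀ M, 1 ≤ M → Integrable (fun ω => c1 * ∑ k : Fin K, ∑ v : Fin P → Fin N,
      if Function.Injective v then |Z M k v ω| else 0) μ := by
    intro M hM
    exact (integrable_finset_sum _ fun k _ =>
      integrable_finset_sum _ fun v _ => hiteint M hM k v).const_mul c1
  -- the L¹ bound on each Z
  have hZL1 : ∀ M, 1 ≤ M → ∀ (k : Fin K) (v : Fin P → Fin N), Function.Injective v →
      ∫ ω, |Z M k v ω| ∂μ ≤ ((Real.sqrt M)⁻¹ + e M) / q := by
    intro M hM k v hv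
    have hMpos : (0:ℝ) < M := by exact_mod_cast hM
    have hMne : ((M:ℝ)) ≠ 0 := ne_of_gt hMpos
    have hsne : Real.sqrt M ≠ 0 := ne_of_gt (Real.sqrt_pos.2 hMpos)
    have heM : 0 ≤ e M := abs_nonneg _
    -- pointwise bound
    have hpt : ∀ ω, |Z M k v ω| ≤ (q * M)⁻¹ * (|S M k v ω - M * q| + M * e M) := by
      intro ω
      have hAM : u M * (R M ^ ((P:ℝ)/2) * M) = 1 :=
        inv_mul_cancel₀ (ne_of_gt (mul_pos (hRpow_pos M) hMpos))
      have hZeq : Z M k v ω = u M * (S M k v ω - R M ^ ((P:ℝ)/2) * M) := by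
        rw [hZdef]
        simp only
        rw [mul_sub, hAM]
      have h1 : |Z M k v ω| = u M * |S M k v ω - R M ^ ((P:ℝ)/2) * M| := by
        rw [hZeq, abs_mul, abs_of_pos (hupos M hM)]
      have h2 : |S M k v ω - R M ^ ((P:ℝ)/2) * M| ≤ |S M k v ω - M * q| + M * e M := by
        have htri : |S M k v ω - R M ^ ((P:ℝ)/2) * M|
            ≤ |S M k v ω - M * q| + |M * q - R M ^ ((P:ℝ)/2) * M| := by
          have := abs_sub_le (S M k v ω) ((M:ℝ) * q) (R M ^ ((P:ℝ)/2) * M)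
          linarith
        have he2 : |(M:ℝ) * q - R M ^ ((P:ℝ)/2) * M| = M * e M := by
          rw [hedef]
          simp only
          rw [show (M:ℝ) * q - R M ^ ((P:ℝ)/2) * M = -(M * (R M ^ ((P:ℝ)/2) - q)) by ring,
            abs_neg, abs_mul, Nat.abs_cast]
        linarith
      have h3 : u M ≤ (q * M)⁻¹ := by
        apply inv_anti₀ (mul_pos hq0 hMpos)
        exact mul_le_mul_of_nonneg_right (hRlb M) hMpos.le
      calc |Z M k v ω| = u M * |S M k v ω - R M ^ ((P:ℝ)/2) * M| := h1
        _ ≤ (q * M)⁻¹ * (|S M k v ω - M * q| + M * e M) := by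
            apply mul_le_mul h3 h2 (abs_nonneg _) (by positivity)
    -- integrate
    have hSint : Integrable (fun ω => |S M k v ω - M * q|) μ := by
      refine integrable_of_bdd (((hSmeas M k v).sub measurable_const).abs) (M + M * |q|)
        fun ω => ?_
      rw [abs_abs]
      calc |S M k v ω - M * q| ≤ |S M k v ω| + |(M:ℝ) * q| := abs_sub _ _
        _ ≤ M + M * |q| := by
            have h4 := hSabs M k v ω
            rw [abs_mul, Nat.abs_cast]
            linarith
    have hZint : Integrable (fun ω => |Z M k v ω|) μ :=
      integrable_of_bdd (hZmeas M k v).abs (u M * M + 1)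
        (fun ω => by rw [abs_abs]; exact hZabs M k v ω hM)
    calc ∫ ω, |Z M k v ω| ∂μ
        ≤ ∫ ω, (q * M)⁻¹ * (|S M k v ω - M * q| + M * e M) ∂μ := by
          exact integral_mono hZint ((hSint.add (integrable_const _)).const_mul _) hpt
      _ = (q * M)⁻¹ * ((∫ ω, |S M k v ω - M * q| ∂μ) + M * e M) := by
          rw [integral_const_mul, integral_add hSint (integrable_const _), integral_const]
          simp
      _ ≤ (q * M)⁻¹ * (Real.sqrt M + M * e M) := by
          refine mul_le_mul_of_nonneg_left ?_ (by positivity)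
          have := hYstats k v hv M hM
          linarith
      _ = (Real.sqrt M / M + e M) / q := by
          field_simp
      _ = ((Real.sqrt M)⁻¹ + e M) / q := by rw [Real.sqrt_div_self]
  -- integral bound on the dominating error
  have hDintegral : ∀ M, 1 ≤ M →
      (∫ ω, (c1 * ∑ k : Fin K, ∑ v : Fin P → Fin N,
        if Function.Injective v then |Z M k v ω| else 0) ∂μ)
      ≤ c1 * (CK * (((Real.sqrt M)⁻¹ + e M) / q)) := by
    intro M hM
    have heM : 0 ≤ e M := abs_nonneg _
    have hBq : 0 ≤ ((Real.sqrt M)⁻¹ + e M) / q := by positivity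
    rw [integral_const_mul,
      integral_finset_sum _ (fun k _ => integrable_finset_sum _ fun v _ => hiteint M hM k v)]
    rw [Finset.sum_congr rfl fun k (_ : k ∈ Finset.univ) =>
      integral_finset_sum _ (fun v _ => hiteint M hM k v)]
    refine mul_le_mul_of_nonneg_left ?_ hc1.le
    calc (∑ k : Fin K, ∑ v : Fin P → Fin N,
          ∫ ω, (if Function.Injective v then |Z M k v ω| else 0) ∂μ)
        ≤ ∑ _k : Fin K, ∑ _v : Fin P → Fin N, ((Real.sqrt M)⁻¹ + e M) / q := by
          refine Finset.sum_le_sum fun k _ => Finset.sum_le_sum fun v _ => ?_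
          by_cases hv : Function.Injective v
          · simp only [if_pos hv]
            exact hZL1 M hM k v hv
          · simp only [if_neg hv, integral_zero]
            exact hBq
      _ = CK * (((Real.sqrt M)⁻¹ + e M) / q) := by
          rw [Finset.sum_const, Finset.sum_const, Finset.card_univ, Finset.card_univ,
            nsmul_eq_mul, nsmul_eq_mul, hCKdef]
          ring
  -- the main quantitative estimate
  have hmain : ∀ M, 1 ≤ M →
      |AUns M - AStor| ≤ (1/(N:ℝ)) * (c1 * (CK * (((Real.sqrt M)⁻¹ + e M) / q))) := by
    intro M hM
    rw [hAU M, hAS, ← mul_sub, abs_mul, abs_of_pos (show (0:ℝ) < 1/(N:ℝ) by positivity)]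
    refine mul_le_mul_of_nonneg_left ?_ (by positivity)
    rw [← integral_sub (hFUint M hM) hFSint]
    calc |∫ ω, (FU M ω - FS ω) ∂μ| ≤ ∫ ω, |FU M ω - FS ω| ∂μ := by
          have := norm_integral_le_integral_norm (μ := μ) (fun ω => FU M ω - FS ω)
          simpa [Real.norm_eq_abs] using this
      _ ≤ ∫ ω, (c1 * ∑ k : Fin K, ∑ v : Fin P → Fin N,
            if Function.Injective v then |Z M k v ω| else 0) ∂μ :=
          integral_mono ((hFUint M hM).sub hFSint).abs (hDint M hM) (hFdiff M hM)
      _ ≤ c1 * (CK * (((Real.sqrt M)⁻¹ + e M) / q)) := hDintegral M hM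
  -- conclusion
  have hlim : Tendsto (fun M : ℕ =>
      (1/(N:ℝ)) * (c1 * (CK * (((Real.sqrt M)⁻¹ + e M) / q)))) atTop (nhds 0) := by
    have h1 : Tendsto (fun M : ℕ => (Real.sqrt M)⁻¹ + e M) atTop (nhds 0) := by
      simpa using hsqrt0.add he0
    have h2 := (((h1.div_const q).const_mul CK).const_mul c1).const_mul (1/(N:ℝ))
    simpa using h2
  rw [tendsto_iff_norm_sub_tendsto_zero]
  refine squeeze_zero' (Eventually.of_forall fun M => norm_nonneg _) ?_ hlim
  filter_upwards [eventually_ge_atTop 1] with M hM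
  simpa [Real.norm_eq_abs] using hmain M hM
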